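/- arXiv:1209.5903 — 2 statements merged into one kernel-verified Lean document; each statement's English description precedes it below -/
import Mathlib

section
/- Let (X,f) be an (F,B)-dialgebra, and suppose the wide pushout (Q,q) of the cone of all quotients (surjective homomorphisms up to isomorphism) of (X,f) exists in Dialg(F,B), with diagonal z : (X,f) → (Q,q). Then for all x,y ∈ X, x is bisimilar to y (i.e., identified by some dialgebra homomorphism out of (X,f)) if and only if z(x) = z(y). Consequently bisimilarity on (X,f) is an equivalence relation. -/
open CategoryTheory

universe u

/-- An (F,B)-dialgebra: a set together with a map `F X → B X`. -/
structure Dialgebra (F B : Type u ⥤ Type u) where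
  carrier : Type u
  str : F.obj carrier → B.obj carrier

/-- A dialgebra homomorphism: `g ∘ F h = B h ∘ f`. -/
def IsDialgHom {F B : Type u ⥤ Type u} (X Y : Dialgebra F B)
    (h : X.carrier → Y.carrier) : Prop :=
  Y.str ∘ ⇑(F.map (TypeCat.ofHom h)) = ⇑(B.map (TypeCat.ofHom h)) ∘ X.str

/-- Bisimilarity in a dialgebra: identification by some homomorphism. -/
def DialgBisim {F B : Type u ⥤ Type u} (X : Dialgebra F B)
    (x y : X.carrier) : Prop :=
  ∃ (Y : Dialgebra F B) (h : X.carrier → Y.carrier), IsDialgHom X Y h ∧ h x = h y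

/-!
A homomorphism identifying `x` and `y` factors as a surjective homomorphism `e` followed by
an injective one, so `e` already identifies `x` and `y`. Being surjective, `e` is one of the
quotients, and its leg `w` into the wide pushout satisfies `w ∘ e = z`; hence `z x = z y`.
Conversely `z` is itself a homomorphism. So bisimilarity is the kernel of `z`.
-/

theorem DialgBisim.apply_eq_of_quotient_cocone {F B : Type u ⥤ Type u} {X : Dialgebra F B}
    {Q : Type*} {z : X.carrier → Q}
    (hfac : ∀ (Y : Dialgebra F B) (h : X.carrier → Y.carrier), IsDialgHom X Y h →
      ∃ (X' : Dialgebra F B) (e : X.carrier → X'.carrier) (m : X'.carrier → Y.carrier),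
        IsDialgHom X X' e ∧ Function.Surjective e ∧ Function.Injective m ∧ m ∘ e = h)
    (hcocone : ∀ (Y : Dialgebra F B) (h : X.carrier → Y.carrier),
      IsDialgHom X Y h → Function.Surjective h → ∃ w : Y.carrier → Q, w ∘ h = z)
    {x y : X.carrier} (hxy : DialgBisim X x y) : z x = z y := by
  obtain ⟨Y, h, hh, hhxy⟩ := hxy
  obtain ⟨X', e, m, he, he_surj, hm_inj, rfl⟩ := hfac Y h hh
  obtain ⟨w, rfl⟩ := hcocone X' e he he_surj
  exact congrArg w (hm_inj hhxy)

/-- Suppose `(Q,q)` is the wide pushout of the cone of quotients of `(X,f)`, with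
diagonal `z` (so `z` is a homomorphism, and every surjective homomorphism out of
`(X,f)` admits a leg into `(Q,q)` commuting with `z`), and assume `Dialg(F,B)` has
epi-mono factorisations.  Then `x` is bisimilar to `y` iff `z x = z y`, so
bisimilarity is an equivalence relation. -/
theorem bisimilarity_quotient_characterises_bisimilarity
    (F B : Type u ⥤ Type u) (X Q : Dialgebra F B) (z : X.carrier → Q.carrier)
    (hz : IsDialgHom X Q z)
    (hfac : ∀ (Y : Dialgebra F B) (h : X.carrier → Y.carrier), IsDialgHom X Y h →
      ∃ (X' : Dialgebra F B) (e : X.carrier → X'.carrier) (m : X'.carrier → Y.carrier),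
        IsDialgHom X X' e ∧ IsDialgHom X' Y m ∧
        Function.Surjective e ∧ Function.Injective m ∧ m ∘ e = h)
    (hcocone : ∀ (Y : Dialgebra F B) (h : X.carrier → Y.carrier),
      IsDialgHom X Y h → Function.Surjective h →
      ∃ w : Y.carrier → Q.carrier, IsDialgHom Y Q w ∧ w ∘ h = z) :
    (∀ x y : X.carrier, DialgBisim X x y ↔ z x = z y) ∧
    Equivalence (DialgBisim X) := by
  have bisim_iff : ∀ x y, DialgBisim X x y ↔ z x = z y := fun _ _ =>
    ⟨DialgBisim.apply_eq_of_quotient_cocone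
      (fun Y h hh => (hfac Y h hh).imp fun _ ⟨e, m, he, _, hrest⟩ => ⟨e, m, he, hrest⟩)
      (fun Y h hh hsurj => (hcocone Y h hh hsurj).imp fun _ => And.right),
      fun hxy => ⟨Q, z, hz, hxy⟩⟩
  have bisim_eq_ker : DialgBisim X = Function.onFun Eq z :=
    funext₂ fun x y => propext (bisim_iff x y)
  exact ⟨bisim_iff, bisim_eq_ker ▸ eq_equivalence.comap z⟩
end

section
/- The functor F(X) = X + (X × X) on Set preserves wide pushouts of epimorphisms, and both F and B(X) = P(X) (powerset) preserve monomorphisms with empty domain. Hence Dialg(F,B) has epi-mono factorisations and every (F,B)-dialgebra has a bisimilarity quotient. -/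
open CategoryTheory

universe u

/-- The interaction functor `F(X) = X + X × X`. -/
def InteractionF : Type u ⥤ Type u where
  obj X := X ⊕ X × X
  map h := TypeCat.ofHom (Sum.map h (Prod.map h h))
  map_id := by intro X; ext x; cases x <;> rfl
  map_comp := by intro X Y Z f g; ext x; cases x <;> rfl

/-- The observation functor `B(X) = P(X)` (powerset). -/
def ObservationB : Type u ⥤ Type u where
  obj X := Set X
  map h := TypeCat.ofHom (Set.image h)
  map_id := by intro X; ext s; simp
  map_comp := by intro X Y Z f g; ext s; exact Set.ext_iff.mp (Set.image_comp g f s) _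

/-- Quotients of a dialgebra, as in the definition of the bisimilarity quotient. -/
def QuotObj {F B : Type u ⥤ Type u} (X : Dialgebra F B) : Type u :=
  Σ s : Setoid X.carrier,
    { g : F.obj (_root_.Quotient s) → B.obj (_root_.Quotient s) //
      IsDialgHom X ⟨_root_.Quotient s, g⟩ (Quotient.mk s) }

/-! Since `F X = X + X × X` acts componentwise, `F (Quot.mk _)` is surjective and the relation it
identifies is generated, coordinate by coordinate, by the kernels of the `F (h i)`; this is the
wide pushout property. Given that `F` preserves surjections and `B` injections, the image
factorization `h = Subtype.val ∘ e` of a homomorphism lifts to dialgebras: the structure on the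
image is `B e ∘ X.str` pushed along the surjection `F e`, well defined because `B Subtype.val` is
injective. The bisimilarity quotient is the wide pushout of all quotient dialgebras of `X`: `F`
preserving it equips the pushout with a structure, and `F` preserving surjections makes the
mediating maps homomorphisms. -/

open Function

theorem Function.Surjective.existsUnique_comp_eq {α β γ : Sort*} {f : α → β} (hf : Surjective f)
    {g : α → γ} (hg : FactorsThrough g f) : ∃! v : β → γ, v ∘ f = g :=
  ⟨g ∘ surjInv hf, funext fun a => hg (surjInv_eq hf (f a)),
    fun _ hv => hf.injective_comp_right <| hv.trans (funext fun a => hg (surjInv_eq hf (f a))).symm⟩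

theorem CategoryTheory.Functor.map_ofHom_comp (G : Type u ⥤ Type u) {A B C : Type u}
    (f : A → B) (g : B → C) :
    ⇑(G.map (TypeCat.ofHom (g ∘ f))) = ⇑(G.map (TypeCat.ofHom g)) ∘ ⇑(G.map (TypeCat.ofHom f)) := by
  rw [show TypeCat.ofHom (g ∘ f) = TypeCat.ofHom f ≫ TypeCat.ofHom g from rfl, G.map_comp]
  rfl

def PreservesSurjections (G : Type u ⥤ Type u) : Prop :=
  ∀ ⦃A C : Type u⦄ (f : A → C), Surjective f → Surjective (G.map (TypeCat.ofHom f))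

def PreservesInjections (G : Type u ⥤ Type u) : Prop :=
  ∀ ⦃A C : Type u⦄ (f : A → C), Injective f → Injective (G.map (TypeCat.ofHom f))

/-- In `Type u` the wide pushout of surjections `h i : X₀ → Y i` is the quotient of `X₀` by the
equivalence relation generated by their kernels; its legs `u i` are fixed by
`u i ∘ h i = Quot.mk _`. -/
def PreservesWidePushoutsOfSurjections (G : Type u ⥤ Type u) : Prop :=
  ∀ (X₀ I : Type u) (Y : I → Type u) (h : ∀ i, X₀ → Y i),
    (∀ i, Surjective (h i)) →
    ∀ u : ∀ i, Y i → Quot (fun a b : X₀ => ∃ i, h i a = h i b),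
      (∀ i, u i ∘ h i = Quot.mk _) →
      ∀ (W : Type u) (k₀ : G.obj X₀ → W) (k : ∀ i, G.obj (Y i) → W),
        (∀ i, k i ∘ ⇑(G.map (TypeCat.ofHom (h i))) = k₀) →
        ∃! v : G.obj (Quot (fun a b : X₀ => ∃ i, h i a = h i b)) → W,
          v ∘ ⇑(G.map (TypeCat.ofHom (Quot.mk _))) = k₀ ∧
          ∀ i, v ∘ ⇑(G.map (TypeCat.ofHom (u i))) = k i

namespace InteractionF

theorem preservesSurjections : PreservesSurjections InteractionF.{u} :=
  fun _ _ _ hf => hf.sumMap (hf.prodMap hf)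

theorem preservesInjections : PreservesInjections InteractionF.{u} :=
  fun _ _ _ hf => hf.sumMap (hf.prodMap hf)

theorem factorsThrough_map_quot_mk {X₀ I W : Type u} {Y : I → Type u} (h : ∀ i, X₀ → Y i)
    {k₀ : InteractionF.obj X₀ → W}
    (hk : ∀ i, FactorsThrough k₀ (InteractionF.map (TypeCat.ofHom (h i)))) :
    FactorsThrough k₀
      (InteractionF.map (TypeCat.ofHom (Quot.mk fun a b : X₀ => ∃ i, h i a = h i b))) := by
  have inl_resp : ∀ a a' : X₀, (∃ i, h i a = h i a') → k₀ (.inl a) = k₀ (.inl a') :=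
    fun a a' ⟨i, e⟩ => hk i (congrArg Sum.inl e)
  have fst_resp : ∀ b a a' : X₀, (∃ i, h i a = h i a') → k₀ (.inr (a, b)) = k₀ (.inr (a', b)) :=
    fun b a a' ⟨i, e⟩ => hk i (congrArg (fun y => Sum.inr (y, h i b)) e)
  have snd_resp : ∀ a b b' : X₀, (∃ i, h i b = h i b') → k₀ (.inr (a, b)) = k₀ (.inr (a, b')) :=
    fun a b b' ⟨i, e⟩ => hk i (congrArg (fun y => Sum.inr (h i a, y)) e)
  -- `Quot.mk r a = Quot.mk r a'` gives `f a = f a'` for each `f` respecting `r`, via `Quot.lift f`.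
  rintro (a | ⟨a, b⟩) (a' | ⟨a', b'⟩) hx
  · exact congrArg (Quot.lift _ inl_resp) (Sum.inl_injective hx)
  · exact absurd hx Sum.inl_ne_inr
  · exact absurd hx Sum.inr_ne_inl
  · obtain ⟨ha, hb⟩ := Prod.mk.inj (Sum.inr_injective hx)
    exact (congrArg (Quot.lift _ (fst_resp b)) ha).trans (congrArg (Quot.lift _ (snd_resp a')) hb)

theorem preservesWidePushoutsOfSurjections :
    PreservesWidePushoutsOfSurjections InteractionF.{u} := by
  intro X₀ I Y h hh u hu W k₀ k hk
  have hk₀ : FactorsThrough k₀ (InteractionF.map (TypeCat.ofHom (Quot.mk _))) :=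
    factorsThrough_map_quot_mk h fun i x y hxy => by rw [← hk i]; exact congrArg (k i) hxy
  obtain ⟨v, hv, hv_unique⟩ :=
    (preservesSurjections _ Quot.mk_surjective).existsUnique_comp_eq hk₀
  refine ⟨v, ⟨hv, fun i => ?_⟩, fun v' hv' => hv_unique v' hv'.1⟩
  apply (preservesSurjections _ (hh i)).injective_comp_right
  calc v ∘ ⇑(InteractionF.map (TypeCat.ofHom (u i))) ∘ ⇑(InteractionF.map (TypeCat.ofHom (h i)))
      = v ∘ ⇑(InteractionF.map (TypeCat.ofHom (u i ∘ h i))) := by rw [← Functor.map_ofHom_comp]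
    _ = k i ∘ ⇑(InteractionF.map (TypeCat.ofHom (h i))) := by rw [hu i, hv, hk i]

end InteractionF

theorem ObservationB.preservesInjections : PreservesInjections ObservationB.{u} :=
  fun _ _ _ hf => Set.image_injective.2 hf

section Dialgebra

variable {F B : Type u ⥤ Type u}

theorem IsDialgHom.of_comp_of_surjective {X Y Z : Dialgebra F B} {e : X.carrier → Y.carrier}
    {v : Y.carrier → Z.carrier} (he : IsDialgHom X Y e) (hFe : Surjective (F.map (TypeCat.ofHom e)))
    (hve : IsDialgHom X Z (v ∘ e)) : IsDialgHom Y Z v := by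
  apply hFe.injective_comp_right
  calc Z.str ∘ ⇑(F.map (TypeCat.ofHom v)) ∘ ⇑(F.map (TypeCat.ofHom e))
      = ⇑(B.map (TypeCat.ofHom (v ∘ e))) ∘ X.str := by rw [← F.map_ofHom_comp]; exact hve
    _ = ⇑(B.map (TypeCat.ofHom v)) ∘ Y.str ∘ ⇑(F.map (TypeCat.ofHom e)) := by
      rw [B.map_ofHom_comp, comp_assoc, ← he]

theorem Dialgebra.exists_surjective_injective_factorization (hF : PreservesSurjections F)
    (hB : PreservesInjections B) {X Y : Dialgebra F B} {h : X.carrier → Y.carrier}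
    (hh : IsDialgHom X Y h) :
    ∃ (X' : Dialgebra F B) (e : X.carrier → X'.carrier) (m : X'.carrier → Y.carrier),
      IsDialgHom X X' e ∧ IsDialgHom X' Y m ∧ Surjective e ∧ Injective m ∧ m ∘ e = h := by
  let e := Set.rangeFactorization h
  have hFe := hF e Set.rangeFactorization_surjective
  have hBe : FactorsThrough (⇑(B.map (TypeCat.ofHom e)) ∘ X.str) (F.map (TypeCat.ofHom e)) := by
    have key : ⇑(B.map (TypeCat.ofHom Subtype.val)) ∘ ⇑(B.map (TypeCat.ofHom e)) ∘ X.str =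
        Y.str ∘ ⇑(F.map (TypeCat.ofHom Subtype.val)) ∘ ⇑(F.map (TypeCat.ofHom e)) := by
      rw [← F.map_ofHom_comp, ← comp_assoc, ← B.map_ofHom_comp]
      exact hh.symm
    intro x y hxy
    apply hB _ Subtype.val_injective
    calc _ = Y.str (F.map (TypeCat.ofHom Subtype.val) (F.map (TypeCat.ofHom e) x)) := congrFun key x
      _ = _ := by rw [hxy]; exact (congrFun key y).symm
  obtain ⟨g, hg, -⟩ := hFe.existsUnique_comp_eq hBe
  exact ⟨⟨Set.range h, g⟩, e, Subtype.val, hg, IsDialgHom.of_comp_of_surjective hg hFe hh,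
    Set.rangeFactorization_surjective, Subtype.val_injective, rfl⟩

theorem Dialgebra.exists_bisimilarity_quotient (hF : PreservesSurjections F)
    (hF_pushout : PreservesWidePushoutsOfSurjections F) (X : Dialgebra F B) :
    ∃ (Q : Dialgebra F B) (z : X.carrier → Q.carrier)
      (leg : ∀ p : QuotObj X, Quotient p.1 → Q.carrier),
      IsDialgHom X Q z ∧
      (∀ p : QuotObj X,
        IsDialgHom ⟨Quotient p.1, p.2.1⟩ Q (leg p) ∧ leg p ∘ Quotient.mk p.1 = z) ∧
      (∀ (W : Dialgebra F B) (w : X.carrier → W.carrier)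
         (wleg : ∀ p : QuotObj X, Quotient p.1 → W.carrier),
        IsDialgHom X W w →
        (∀ p : QuotObj X,
          IsDialgHom ⟨Quotient p.1, p.2.1⟩ W (wleg p) ∧ wleg p ∘ Quotient.mk p.1 = w) →
        ∃! v : Q.carrier → W.carrier,
          IsDialgHom Q W v ∧ v ∘ z = w ∧ ∀ p, v ∘ leg p = wleg p) := by
  let q : ∀ p : QuotObj X, X.carrier → Quotient p.1 := fun p => Quotient.mk p.1
  let R : X.carrier → X.carrier → Prop := fun a b => ∃ p, q p a = q p b
  let z : X.carrier → Quot R := Quot.mk R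
  let leg : ∀ p : QuotObj X, Quotient p.1 → Quot R := fun p =>
    Quotient.lift z fun _ _ hab => Quot.sound ⟨p, Quotient.sound hab⟩
  have hleg : ∀ p, leg p ∘ q p = z := fun _ => rfl
  have hcocone : ∀ p, (⇑(B.map (TypeCat.ofHom (leg p))) ∘ p.2.1) ∘ ⇑(F.map (TypeCat.ofHom (q p))) =
      ⇑(B.map (TypeCat.ofHom z)) ∘ X.str := fun p => by
    rw [comp_assoc, p.2.2, ← comp_assoc, ← B.map_ofHom_comp]
    rfl
  obtain ⟨g, ⟨hg, hg_leg⟩, -⟩ := hF_pushout X.carrier (QuotObj X) (fun p => Quotient p.1) q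
    (fun _ => Quotient.mk_surjective) leg hleg _ _ _ hcocone
  refine ⟨⟨Quot R, g⟩, z, leg, hg, fun p => ⟨hg_leg p, hleg p⟩, ?_⟩
  intro W w wleg hw hwleg
  have hw_resp : ∀ a b, R a b → w a = w b := by
    rintro a b ⟨p, hab⟩
    rw [← (hwleg p).2]
    exact congrArg (wleg p) hab
  refine ⟨Quot.lift w hw_resp,
    ⟨IsDialgHom.of_comp_of_surjective hg (hF z Quot.mk_surjective) hw, rfl, fun p => ?_⟩, ?_⟩
  · exact Quotient.mk_surjective.injective_comp_right (hwleg p).2.symm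
  · rintro v ⟨-, hvz, -⟩
    exact Quot.mk_surjective.injective_comp_right hvz

end Dialgebra

/-- `F(X) = X + X × X` preserves wide pushouts of epimorphisms, and both `F` and
`B(X) = P(X)` preserve monomorphisms with empty domain; hence `Dialg(F,B)` has
epi-mono factorisations and every `(F,B)`-dialgebra has a bisimilarity
quotient. -/
theorem interaction_observation_properties :
    -- F preserves wide (small) pushouts of epimorphisms
    (∀ (X₀ I : Type u) (Y : I → Type u) (h : ∀ i, X₀ → Y i),
      (∀ i, Function.Surjective (h i)) →
      ∀ u : ∀ i, Y i → Quot (fun a b : X₀ => ∃ i, h i a = h i b),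
        (∀ i, u i ∘ h i = Quot.mk _) →
        ∀ (W : Type u) (k₀ : InteractionF.obj X₀ → W)
          (k : ∀ i, InteractionF.obj (Y i) → W),
          (∀ i, k i ∘ ⇑(InteractionF.map (TypeCat.ofHom (h i))) = k₀) →
          ∃! v : InteractionF.obj (Quot (fun a b : X₀ => ∃ i, h i a = h i b)) → W,
            v ∘ ⇑(InteractionF.map (TypeCat.ofHom (Quot.mk _))) = k₀ ∧
            ∀ i, v ∘ ⇑(InteractionF.map (TypeCat.ofHom (u i))) = k i) ∧
    -- F and B preserve monos with empty domain
    (∀ (A C : Type u) (g : A → C), IsEmpty A → Function.Injective g →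
      Function.Injective ⇑(InteractionF.map (TypeCat.ofHom g))) ∧
    (∀ (A C : Type u) (g : A → C), IsEmpty A → Function.Injective g →
      Function.Injective ⇑(ObservationB.map (TypeCat.ofHom g))) ∧
    -- hence: epi-mono factorizations in Dialg(F,B)
    (∀ (X Y : Dialgebra InteractionF.{u} ObservationB.{u})
       (h : X.carrier → Y.carrier), IsDialgHom X Y h →
      ∃ (X' : Dialgebra InteractionF.{u} ObservationB.{u})
        (e : X.carrier → X'.carrier) (m : X'.carrier → Y.carrier),
        IsDialgHom X X' e ∧ IsDialgHom X' Y m ∧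
        Function.Surjective e ∧ Function.Injective m ∧ m ∘ e = h) ∧
    -- and: every (F,B)-dialgebra has a bisimilarity quotient
    (∀ X : Dialgebra InteractionF.{u} ObservationB.{u},
      ∃ (Q : Dialgebra InteractionF.{u} ObservationB.{u})
        (z : X.carrier → Q.carrier)
        (leg : ∀ p : QuotObj X, _root_.Quotient p.1 → Q.carrier),
        IsDialgHom X Q z ∧
        (∀ p : QuotObj X,
          IsDialgHom ⟨_root_.Quotient p.1, p.2.1⟩ Q (leg p) ∧
          leg p ∘ Quotient.mk p.1 = z) ∧
        (∀ (W : Dialgebra InteractionF.{u} ObservationB.{u})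
           (w : X.carrier → W.carrier)
           (wleg : ∀ p : QuotObj X, _root_.Quotient p.1 → W.carrier),
          IsDialgHom X W w →
          (∀ p : QuotObj X,
            IsDialgHom ⟨_root_.Quotient p.1, p.2.1⟩ W (wleg p) ∧
            wleg p ∘ Quotient.mk p.1 = w) →
          ∃! v : Q.carrier → W.carrier,
            IsDialgHom Q W v ∧ v ∘ z = w ∧ ∀ p, v ∘ leg p = wleg p)) :=
  ⟨InteractionF.preservesWidePushoutsOfSurjections,
    fun _ _ g _ hg => InteractionF.preservesInjections g hg,
    fun _ _ g _ hg => ObservationB.preservesInjections g hg,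
    fun _ _ _ hh => Dialgebra.exists_surjective_injective_factorization
      InteractionF.preservesSurjections ObservationB.preservesInjections hh,
    Dialgebra.exists_bisimilarity_quotient InteractionF.preservesSurjections
      InteractionF.preservesWidePushoutsOfSurjections⟩
end
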